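/- arXiv:2501.06258 — 3 statements merged into one kernel-verified Lean document; each statement's English description precedes it below -/
import Mathlib

section
/- Consider the E2TC algorithm on the stochastic contextual bandit with pre-training: during the first T₁+T₂ rounds it selects actions A_t uniformly at random from {1,…,K}; from the data observed in these rounds it computes estimates (w̄, θ̄) with ‖w̄‖ ≤ B_w and ‖θ̄‖ ≤ B_θ, measurable with respect to the first T₁+T₂ contexts, actions, and rewards; for t = T₁+T₂+1,…,T it selects A_t ∈ argmax_{a∈{1,…,K}} w̄ᵀφ_{θ̄}(X_{t,a}). Suppose that with probability at least 1−δ the suboptimality gap satisfies 𝔯(w̄,θ̄) − 𝔯(w*,θ*) < ε. Then the expected pseudo-regret satisfies E[R_{1:T}] ≤ 2B_wB_φTδ + 2B_wB_φ(T₁+T₂) + K(T−T₁−T₂)·√ε. -/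
open MeasureTheory Matrix Real
open scoped ENNReal

/-!
An exploration round costs at most `2 B_w B_φ`. In an exploitation round the greedy choice
gives regret at most `Σ_a |Δ(X_{t,a})|`, where `Δ = w̄ᵀφ_θ̄ − w*ᵀφ_θ*`; the contexts of that
round are independent of the estimates, so integrating them out first gives at most
`K · E_X|Δ| ≤ K √(E_X Δ²)` (Cauchy–Schwarz), i.e. at most `K √ε` on the good event, and
at most `2 B_w B_φ` on the bad event, which has probability at most `δ`.
-/

noncomputable def vnorm {n : ℕ} (v : Fin n → ℝ) : ℝ := Real.sqrt (v ⬝ᵥ v)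

lemma abs_dotProduct_le_of_vnorm_le {n : ℕ} {v w : Fin n → ℝ} {a b : ℝ} (hv : vnorm v ≤ a)
    (hw : vnorm w ≤ b) : |v ⬝ᵥ w| ≤ a * b := by
  have hsq : (v ⬝ᵥ w) ^ 2 ≤ (v ⬝ᵥ v) * (w ⬝ᵥ w) := by
    simpa [dotProduct, sq] using Finset.sum_mul_sq_le_sq_mul_sq Finset.univ v w
  have hvv : 0 ≤ v ⬝ᵥ v := Finset.sum_nonneg fun i _ => mul_self_nonneg (v i)
  calc |v ⬝ᵥ w| ≤ vnorm v * vnorm w := by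
        rw [vnorm, vnorm, ← Real.sqrt_mul hvv]
        exact Real.abs_le_sqrt hsq
    _ ≤ a * b := mul_le_mul hv hw (Real.sqrt_nonneg _) ((Real.sqrt_nonneg _).trans hv)

lemma sub_le_sum_abs_sub_of_le {ι : Type*} [Fintype ι] {u v : ι → ℝ} {i j : ι}
    (hij : v i ≤ v j) : u i - u j ≤ ∑ b, |v b - u b| := by
  classical
  rcases eq_or_ne i j with rfl | hne
  · simp only [sub_self]; positivity
  calc u i - u j ≤ |v i - u i| + |v j - u j| := by
        linarith [neg_abs_le (v i - u i), le_abs_self (v j - u j)]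
    _ = ∑ b ∈ {i, j}, |v b - u b| := by rw [Finset.sum_pair hne]
    _ ≤ ∑ b, |v b - u b| :=
        Finset.sum_le_sum_of_subset_of_nonneg (Finset.subset_univ _) fun _ _ _ => abs_nonneg _

lemma sum_le_card_mul_add_sum_compl {ι : Type*} [Fintype ι] (p : ι → Prop) [DecidablePred p]
    {x : ι → ℝ} {y : {i // ¬p i} → ℝ} {M : ℝ} (hp : ∀ i, p i → x i ≤ M)
    (hnp : ∀ i (hi : ¬p i), x i ≤ y ⟨i, hi⟩) :
    ∑ i, x i ≤ Fintype.card {i // p i} * M + ∑ i : {i // ¬p i}, y i := by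
  rw [← Fintype.sum_subtype_add_sum_subtype p x]
  refine add_le_add ?_ (Finset.sum_le_sum fun i _ => hnp i.1 i.2)
  simpa using Finset.sum_le_card_nsmul Finset.univ _ M fun i _ => hp i.1 i.2

lemma card_subtype_val_lt {T n : ℕ} (h : n ≤ T) : Fintype.card {t : Fin T // (t : ℕ) < n} = n := by
  rw [Fintype.card_subtype, Fin.card_filter_val_lt, min_eq_right h]

lemma card_subtype_not_val_lt {T n : ℕ} (h : n ≤ T) :
    Fintype.card {t : Fin T // ¬(t : ℕ) < n} = T - n := by
  rw [Fintype.card_subtype_compl, card_subtype_val_lt h, Fintype.card_fin]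

lemma regret_le_explore_add_exploit {ι κ : Type*} [Fintype ι] [Fintype κ]
    (explore : ι → Prop) [DecidablePred explore] {f g : ι → κ → ℝ} {B : ℝ}
    (hf : ∀ i a, |f i a| ≤ B) {Astar A : ι → κ}
    (hgreedy : ∀ i, ¬explore i → g i (Astar i) ≤ g i (A i)) :
    ∑ i, (f i (Astar i) - f i (A i)) ≤ Fintype.card (Subtype explore) * (2 * B) +
      ∑ s : {i // ¬explore i}, min (2 * B) (∑ a, |g s a - f s a|) := by
  have hround : ∀ i, f i (Astar i) - f i (A i) ≤ 2 * B := fun i => by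
    linarith [(abs_le.1 (hf i (Astar i))).2, (abs_le.1 (hf i (A i))).1]
  exact sum_le_card_mul_add_sum_compl _ (fun i _ => hround i) fun i hi =>
    le_min (hround i) (sub_le_sum_abs_sub_of_le (hgreedy i hi))

lemma integral_abs_le_sqrt_integral_sq {Ω : Type*} [MeasurableSpace Ω] {μ : Measure Ω}
    [IsProbabilityMeasure μ] {g : Ω → ℝ} (hg : MemLp g 2 μ) :
    ∫ x, |g x| ∂μ ≤ √(∫ x, g x ^ 2 ∂μ) := by
  have hvar : ProbabilityTheory.variance (fun x => |g x|) μ =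
      ∫ x, |g x| ^ 2 ∂μ - (∫ x, |g x| ∂μ) ^ 2 := ProbabilityTheory.variance_eq_sub hg.abs
  have := ProbabilityTheory.variance_nonneg (fun x => |g x|) μ
  simp only [sq_abs] at hvar
  exact Real.le_sqrt_of_sq_le (by linarith)

lemma lintegral_ofReal_sum_abs_apply_le {ι X : Type*} [Fintype ι] [MeasurableSpace X]
    {DX : Measure X} [IsProbabilityMeasure DX] {DC : Measure (ι → X)}
    (hmarg : ∀ a, DC.map (fun c => c a) = DX) {g : X → ℝ} (hg : Measurable g) {M : ℝ}
    (hgM : ∀ x, |g x| ≤ M) :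
    ∫⁻ z, ENNReal.ofReal (∑ a, |g (z a)|) ∂DC ≤
      Fintype.card ι * ENNReal.ofReal √(∫ x, g x ^ 2 ∂DX) := by
  have hint : Integrable (fun x => |g x|) DX :=
    .of_bound hg.abs.aestronglyMeasurable M (.of_forall fun x => by simpa using hgM x)
  have hmem : MemLp g 2 DX :=
    .of_bound hg.aestronglyMeasurable M (.of_forall fun x => by simpa using hgM x)
  calc ∫⁻ z, ENNReal.ofReal (∑ a, |g (z a)|) ∂DC
      = ∑ a, ∫⁻ z, ENNReal.ofReal |g (z a)| ∂DC := by
        simp_rw [ENNReal.ofReal_sum_of_nonneg fun a _ => abs_nonneg (g _)]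
        exact lintegral_finsetSum _ fun a _ => (hg.comp (measurable_pi_apply a)).abs.ennreal_ofReal
    _ = ∑ _a : ι, ∫⁻ x, ENNReal.ofReal |g x| ∂DX := by
        refine Finset.sum_congr rfl fun a _ => ?_
        rw [← hmarg a, lintegral_map hg.abs.ennreal_ofReal (measurable_pi_apply a)]
    _ = Fintype.card ι * ENNReal.ofReal (∫ x, |g x| ∂DX) := by
        rw [Finset.sum_const, nsmul_eq_mul, Finset.card_univ,
          ofReal_integral_eq_lintegral_ofReal hint (.of_forall fun x => abs_nonneg _)]
    _ ≤ Fintype.card ι * ENNReal.ofReal √(∫ x, g x ^ 2 ∂DX) := by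
        gcongr
        exact integral_abs_le_sqrt_integral_sq hmem

lemma lintegral_ofReal_le_add_card_mul {ι β : Type*} [Fintype ι] [MeasurableSpace β]
    {ν : Measure β} [IsProbabilityMeasure ν] {f : (ι → β) → ℝ} {g : β → ℝ} (hg : Measurable g)
    (hg₀ : ∀ z, 0 ≤ g z) {C : ℝ} (hC : 0 ≤ C) (hf : ∀ y, f y ≤ C + ∑ i, g (y i)) :
    ∫⁻ y, ENNReal.ofReal (f y) ∂(Measure.pi fun _ : ι => ν) ≤
      ENNReal.ofReal C + Fintype.card ι * ∫⁻ z, ENNReal.ofReal (g z) ∂ν := by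
  calc ∫⁻ y, ENNReal.ofReal (f y) ∂(Measure.pi fun _ : ι => ν)
      ≤ ∫⁻ y, ENNReal.ofReal C + ∑ i, ENNReal.ofReal (g (y i)) ∂(Measure.pi fun _ : ι => ν) := by
        refine lintegral_mono fun y => ?_
        rw [← ENNReal.ofReal_sum_of_nonneg fun i _ => hg₀ _,
          ← ENNReal.ofReal_add hC (Finset.sum_nonneg fun i _ => hg₀ _)]
        exact ENNReal.ofReal_le_ofReal (hf y)
    _ = ENNReal.ofReal C + Fintype.card ι * ∫⁻ z, ENNReal.ofReal (g z) ∂ν := by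
        rw [lintegral_add_left measurable_const, lintegral_const, measure_univ, mul_one,
          lintegral_finsetSum (f := fun i (y : ι → β) => ENNReal.ofReal (g (y i))) Finset.univ
            fun i _ => hg.ennreal_ofReal.comp (measurable_pi_apply i)]
        simp_rw [(measurePreserving_eval (fun _ : ι => ν) _).lintegral_comp hg.ennreal_ofReal]
        rw [Finset.sum_const, nsmul_eq_mul, Finset.card_univ]

lemma lintegral_ofReal_le_of_le_add_sum_min {ι κ X : Type*} [Fintype ι] [Fintype κ]
    [MeasurableSpace X] {DX : Measure X} [IsProbabilityMeasure DX] {DC : Measure (κ → X)}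
    [IsProbabilityMeasure DC] (hmarg : ∀ a, DC.map (fun c => c a) = DX) {g : X → ℝ}
    (hg : Measurable g) {M : ℝ} (hM : 0 ≤ M) (hgM : ∀ x, |g x| ≤ M) {C : ℝ} (hC : 0 ≤ C)
    {f : (ι → κ → X) → ℝ} (hf : ∀ y, f y ≤ C + ∑ i, min M (∑ a, |g (y i a)|)) :
    ∫⁻ y, ENNReal.ofReal (f y) ∂(Measure.pi fun _ : ι => DC) ≤ ENNReal.ofReal C +
      Fintype.card ι * min (ENNReal.ofReal M)
        (Fintype.card κ * ENNReal.ofReal √(∫ x, g x ^ 2 ∂DX)) := by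
  have hmin : Measurable fun z : κ → X => min M (∑ a, |g (z a)|) := by fun_prop
  refine (lintegral_ofReal_le_add_card_mul (ν := DC) hmin
    (fun z => le_min hM (Finset.sum_nonneg fun a _ => abs_nonneg _)) hC hf).trans ?_
  gcongr
  refine le_min ?_ ((lintegral_mono fun z => ENNReal.ofReal_le_ofReal (min_le_right _ _)).trans
    (lintegral_ofReal_sum_abs_apply_le hmarg hg hgM))
  exact (lintegral_mono fun z => ENNReal.ofReal_le_ofReal (min_le_left _ _)).trans_eq (by simp)

lemma integral_le_of_lintegral_ofReal_le {Ω : Type*} [MeasurableSpace Ω] {μ : Measure Ω}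
    {f : Ω → ℝ} (hf : Integrable f μ) {b : ℝ} (hb : 0 ≤ b)
    (h : ∫⁻ x, ENNReal.ofReal (f x) ∂μ ≤ ENNReal.ofReal b) : ∫ x, f x ∂μ ≤ b := by
  rw [integral_eq_lintegral_pos_part_sub_lintegral_neg_part hf]
  exact (sub_le_self _ ENNReal.toReal_nonneg).trans (ENNReal.toReal_le_of_le_ofReal hb h)

lemma lintegral_le_add_mul_of_le_on {Ω : Type*} [MeasurableSpace Ω] {ρ : Measure Ω}
    [IsProbabilityMeasure ρ] {Φ : Ω → ℝ≥0∞} (hΦ : AEMeasurable Φ ρ) {G : Set Ω}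
    {a c : ℝ≥0∞} {δ : ℝ} (hle : ∀ ω, Φ ω ≤ a + c) (hG : ∀ ω ∈ G, Φ ω ≤ a)
    (hρG : ENNReal.ofReal (1 - δ) ≤ ρ G) :
    ∫⁻ ω, Φ ω ∂ρ ≤ a + c * ENNReal.ofReal δ := by
  set E := {ω | a < Φ ω}
  have hE : NullMeasurableSet E ρ := nullMeasurableSet_lt aemeasurable_const hΦ
  have hρE : ρ E ≤ ENNReal.ofReal δ := by
    have hGE : ρ G ≤ ρ Eᶜ := measure_mono fun ω hω => not_lt.2 (hG ω hω)
    calc ρ E ≤ 1 - ENNReal.ofReal (1 - δ) := by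
          refine ENNReal.le_sub_of_add_le_right ENNReal.ofReal_ne_top ?_
          calc ρ E + ENNReal.ofReal (1 - δ) ≤ ρ E + ρ Eᶜ := by grw [hρG, hGE]
            _ = 1 := by rw [measure_add_measure_compl₀ hE, measure_univ]
      _ ≤ ENNReal.ofReal δ := by
          rw [tsub_le_iff_right, ← ENNReal.ofReal_one]
          calc ENNReal.ofReal 1 = ENNReal.ofReal (δ + (1 - δ)) := by ring_nf
            _ ≤ _ := ENNReal.ofReal_add_le
  calc ∫⁻ ω, Φ ω ∂ρ ≤ ∫⁻ ω, a + E.indicator (fun _ => c) ω ∂ρ := by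
        refine lintegral_mono fun ω => ?_
        by_cases hω : ω ∈ E
        · simpa [Set.indicator_of_mem hω] using hle ω
        · simpa [Set.indicator_of_notMem hω, E] using hω
    _ = a + c * ρ E := by
        rw [lintegral_add_left measurable_const, lintegral_const, measure_univ, mul_one,
          lintegral_indicator_const₀ hE]
    _ ≤ a + c * ENNReal.ofReal δ := by gcongr

def MeasurableEquiv.piProdSplit {ι β : Type*} {α : ι → Type*} [∀ i, MeasurableSpace (α i)]
    [MeasurableSpace β] (p : ι → Prop) [DecidablePred p] :
    (∀ i, α i) × β ≃ᵐ (∀ i : {i // ¬p i}, α i) × ((∀ i : Subtype p, α i) × β) :=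
  (((MeasurableEquiv.piEquivPiSubtypeProd α p).trans MeasurableEquiv.prodComm).prodCongr
    (MeasurableEquiv.refl β)).trans MeasurableEquiv.prodAssoc

lemma measurePreserving_piProdSplit {ι β : Type*} [Fintype ι] {α : ι → Type*}
    [∀ i, MeasurableSpace (α i)] [MeasurableSpace β] (p : ι → Prop) [DecidablePred p]
    (μ : ∀ i, Measure (α i)) [∀ i, SigmaFinite (μ i)] (ν : Measure β) [SigmaFinite ν] :
    MeasurePreserving (MeasurableEquiv.piProdSplit p) ((Measure.pi μ).prod ν)
      ((Measure.pi fun i : {i // ¬p i} => μ i).prod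
        ((Measure.pi fun i : Subtype p => μ i).prod ν)) :=
  (measurePreserving_prodAssoc _ _ _).comp
    ((Measure.measurePreserving_swap.comp (measurePreserving_piEquivPiSubtypeProd μ p)).prod
      (MeasurePreserving.id ν))

theorem integral_le_of_le_explore_add_exploit {ι κ X ΩE : Type*} [Fintype ι] [Fintype κ]
    [MeasurableSpace X] [MeasurableSpace ΩE] (explore : ι → Prop) [DecidablePred explore]
    {DX : Measure X} [IsProbabilityMeasure DX] {DC : Measure (κ → X)} [IsProbabilityMeasure DC]
    (hmarg : ∀ a, DC.map (fun c => c a) = DX) {PE : Measure ΩE} [IsProbabilityMeasure PE]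
    {Δ : (Subtype explore → κ → X) → ΩE → X → ℝ} (hΔ : ∀ h e, Measurable (Δ h e))
    {M : ℝ} (hM : 0 ≤ M) (hΔM : ∀ h e x, |Δ h e x| ≤ M)
    {R : (ι → κ → X) × ΩE → ℝ} (hRint : Integrable R ((Measure.pi fun _ => DC).prod PE))
    (hR : ∀ p, R p ≤ Fintype.card (Subtype explore) * M + ∑ s : {i // ¬explore i},
      min M (∑ a, |Δ (fun i => p.1 i) p.2 (p.1 s a)|))
    {ε δ : ℝ} (hδ : 0 ≤ δ)
    (hgap : ENNReal.ofReal (1 - δ) ≤ (Measure.pi fun _ => DC).prod PE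
      {p : (ι → κ → X) × ΩE | ∫ x, Δ (fun i => p.1 i) p.2 x ^ 2 ∂DX < ε}) :
    ∫ p, R p ∂((Measure.pi fun _ => DC).prod PE) ≤
      Fintype.card (Subtype explore) * M +
        Fintype.card {i // ¬explore i} * (Fintype.card κ * √ε + M * δ) := by
  set C := Fintype.card (Subtype explore) * M
  have hC : 0 ≤ C := by positivity
  set Θ := MeasurableEquiv.piProdSplit (α := fun _ : ι => κ → X) (β := ΩE) explore
  set μt := Measure.pi fun _ : {i // ¬explore i} => DC
  have hΘ : MeasurePreserving Θ ((Measure.pi fun _ => DC).prod PE)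
      (μt.prod ((Measure.pi fun _ => DC).prod PE)) :=
    measurePreserving_piProdSplit explore _ PE
  set N := Fintype.card {i // ¬explore i}
  set F : ({i // ¬explore i} → κ → X) × ((Subtype explore → κ → X) × ΩE) → ℝ :=
    fun q => C + ∑ s, min M (∑ a, |Δ q.2.1 q.2.2 (q.1 s a)|)
  have hRF : ∀ q, R (Θ.symm q) ≤ F q := fun q => by
    have h : R (Θ.symm q) ≤ F (Θ (Θ.symm q)) := hR (Θ.symm q)
    rwa [Θ.apply_symm_apply] at h
  -- The estimates, hence `Δ` and the gap event, need not be measurable in the exploration data;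
  -- only `R` is. Integrating out the exploitation contexts gives an a.e.-measurable `Φ`, whose
  -- level set is then compared with the gap event through outer measure.
  set Φ := fun ω => ∫⁻ y, ENNReal.ofReal (R (Θ.symm (y, ω))) ∂μt
  have hk : AEMeasurable (fun q => ENNReal.ofReal (R (Θ.symm q)))
      (μt.prod ((Measure.pi fun _ => DC).prod PE)) :=
    hRint.aemeasurable.ennreal_ofReal.comp_quasiMeasurePreserving
      (hΘ.symm Θ).quasiMeasurePreserving
  have hlint : ∫⁻ p, ENNReal.ofReal (R p) ∂((Measure.pi fun _ => DC).prod PE) =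
      ∫⁻ ω, Φ ω ∂((Measure.pi fun _ => DC).prod PE) := by
    rw [← (hΘ.symm Θ).lintegral_comp_emb Θ.symm.measurableEmbedding, lintegral_prod_symm _ hk]
  have hΦ_le : ∀ ω : (Subtype explore → κ → X) × ΩE, Φ ω ≤ ENNReal.ofReal C +
      N * min (ENNReal.ofReal M) (Fintype.card κ * ENNReal.ofReal √(∫ x, Δ ω.1 ω.2 x ^ 2 ∂DX)) :=
    fun ω => lintegral_ofReal_le_of_le_add_sum_min hmarg (hΔ ω.1 ω.2) hM (hΔM ω.1 ω.2) hC
      fun y => hRF (y, ω)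
  have hρG : ENNReal.ofReal (1 - δ) ≤ (Measure.pi fun _ => DC).prod PE
      {ω | ∫ x, Δ ω.1 ω.2 x ^ 2 ∂DX < ε} :=
    hgap.trans ((measurePreserving_snd.comp hΘ).measure_preimage_le _)
  have hΦ_int := lintegral_le_add_mul_of_le_on (hk.lintegral_prod_left') (δ := δ)
    (a := ENNReal.ofReal C + N * (Fintype.card κ * ENNReal.ofReal √ε))
    (c := N * ENNReal.ofReal M) (fun ω => ?_) (fun ω hω => ?_) hρG
  · have hval : ENNReal.ofReal C + N * (Fintype.card κ * ENNReal.ofReal √ε) +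
        N * ENNReal.ofReal M * ENNReal.ofReal δ =
        ENNReal.ofReal (C + N * (Fintype.card κ * √ε + M * δ)) := by
      rw [ENNReal.ofReal_add hC (by positivity), ENNReal.ofReal_mul (Nat.cast_nonneg N),
        ENNReal.ofReal_add (by positivity) (by positivity),
        ENNReal.ofReal_mul (Nat.cast_nonneg (Fintype.card κ)), ENNReal.ofReal_mul hM,
        ENNReal.ofReal_natCast, ENNReal.ofReal_natCast]
      ring
    exact integral_le_of_lintegral_ofReal_le hRint (by positivity) (hlint ▸ hΦ_int.trans_eq hval)
  · calc Φ ω ≤ ENNReal.ofReal C + N * ENNReal.ofReal M :=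
          (hΦ_le ω).trans (by gcongr; exact min_le_left _ _)
      _ ≤ _ := by rw [add_right_comm]; exact le_self_add
  · exact (hΦ_le ω).trans (by gcongr; exact (min_le_right _ _).trans (by gcongr; exact hω.le))

theorem e2tc_low_risk_to_low_regret_general
    {d d0 K T T1 T2 : ℕ} (hTT : T1 + T2 ≤ T)
    {X : Type*} [MeasurableSpace X]
    (DX : Measure X) [IsProbabilityMeasure DX]
    (DC : Measure (Fin K → X)) [IsProbabilityMeasure DC]
    (hmarg : ∀ a : Fin K, DC.map (fun c => c a) = DX)
    {ΩE : Type*} [MeasurableSpace ΩE] (PE : Measure ΩE) [IsProbabilityMeasure PE]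
    (φ : (Fin d0 → ℝ) → X → Fin d → ℝ)
    (hφmeas : ∀ θ i, Measurable fun x => φ θ x i)
    (Bw Bθ Bφ : ℝ)
    (wstar : Fin d → ℝ) (θstar : Fin d0 → ℝ)
    (hws : vnorm wstar ≤ Bw) (hθs : vnorm θstar ≤ Bθ)
    (hφb : ∀ θ, vnorm θ ≤ Bθ → ∀ x, vnorm (φ θ x) ≤ Bφ)
    (ε δ : ℝ) (hδ : 0 ≤ δ)
    (wbar : (Fin (T1 + T2) → (Fin K → X)) → ΩE → Fin d → ℝ)
    (θbar : (Fin (T1 + T2) → (Fin K → X)) → ΩE → Fin d0 → ℝ)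
    (hwbarb : ∀ c e, vnorm (wbar c e) ≤ Bw)
    (hθbarb : ∀ c e, vnorm (θbar c e) ≤ Bθ)
    (A : Fin T → (Fin T → Fin K → X) → ΩE → Fin K)
    (Astar : Fin T → (Fin T → Fin K → X) → Fin K)
    (hgreedy : ∀ (t : Fin T), T1 + T2 ≤ (t : ℕ) →
      ∀ (c : Fin T → Fin K → X) (e : ΩE) (a : Fin K),
        wbar (fun i => c (Fin.castLE hTT i)) e ⬝ᵥ
            φ (θbar (fun i => c (Fin.castLE hTT i)) e) (c t a) ≤
          wbar (fun i => c (Fin.castLE hTT i)) e ⬝ᵥ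
            φ (θbar (fun i => c (Fin.castLE hTT i)) e) (c t (A t c e)))
    (R : (Fin T → Fin K → X) × ΩE → ℝ)
    (hR : ∀ p, R p = ∑ t : Fin T,
      (wstar ⬝ᵥ φ θstar (p.1 t (Astar t p.1)) -
        wstar ⬝ᵥ φ θstar (p.1 t (A t p.1 p.2))))
    (hRint : Integrable R ((Measure.pi fun _ : Fin T => DC).prod PE))
    (hgap : ((Measure.pi fun _ : Fin T => DC).prod PE)
        {p : (Fin T → Fin K → X) × ΩE |
          (∫ x, (wbar (fun i => p.1 (Fin.castLE hTT i)) p.2 ⬝ᵥ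
                φ (θbar (fun i => p.1 (Fin.castLE hTT i)) p.2) x -
              wstar ⬝ᵥ φ θstar x) ^ 2 ∂DX) < ε}
      ≥ ENNReal.ofReal (1 - δ)) :
    ∫ p, R p ∂((Measure.pi fun _ : Fin T => DC).prod PE) ≤
      2 * Bw * Bφ * T * δ + 2 * Bw * Bφ * (T1 + T2) +
        K * ((T : ℝ) - T1 - T2) * Real.sqrt ε := by
  obtain ⟨x₀⟩ := nonempty_of_isProbabilityMeasure DX
  have hBw : 0 ≤ Bw := (Real.sqrt_nonneg _).trans hws
  have hBφ : 0 ≤ Bφ := (Real.sqrt_nonneg _).trans (hφb θstar hθs x₀)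
  have hreward : ∀ w θ, vnorm w ≤ Bw → vnorm θ ≤ Bθ → ∀ x, |w ⬝ᵥ φ θ x| ≤ Bw * Bφ :=
    fun w θ hw hθ x => abs_dotProduct_le_of_vnorm_le hw (hφb θ hθ x)
  have hmeas : ∀ w θ, Measurable fun x => w ⬝ᵥ φ θ x := fun w θ =>
    Finset.measurable_sum Finset.univ fun i _ => (hφmeas θ i).const_mul (w i)
  let head (h : {t : Fin T // (t : ℕ) < T1 + T2} → Fin K → X) : Fin (T1 + T2) → Fin K → X :=
    fun i => h ⟨Fin.castLE hTT i, i.isLt⟩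
  let Δ h e x := wbar (head h) e ⬝ᵥ φ (θbar (head h) e) x - wstar ⬝ᵥ φ θstar x
  have hΔM : ∀ h e x, |Δ h e x| ≤ 2 * (Bw * Bφ) := fun h e x => (abs_sub _ _).trans
    (by linarith [hreward _ _ (hwbarb (head h) e) (hθbarb (head h) e) x, hreward _ _ hws hθs x])
  have hRle : ∀ p, R p ≤ Fintype.card {t : Fin T // (t : ℕ) < T1 + T2} * (2 * (Bw * Bφ)) +
      ∑ s : {t : Fin T // ¬(t : ℕ) < T1 + T2},
        min (2 * (Bw * Bφ)) (∑ a, |Δ (fun t => p.1 t) p.2 (p.1 s a)|) := fun p =>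
    (hR p).trans_le <| regret_le_explore_add_exploit _
      (f := fun t a => wstar ⬝ᵥ φ θstar (p.1 t a))
      (g := fun t a => wbar (fun i => p.1 (Fin.castLE hTT i)) p.2 ⬝ᵥ
        φ (θbar (fun i => p.1 (Fin.castLE hTT i)) p.2) (p.1 t a))
      (fun t a => hreward _ _ hws hθs (p.1 t a)) fun t ht => hgreedy t (not_lt.1 ht) p.1 p.2 _
  have hbound := integral_le_of_le_explore_add_exploit _ hmarg
    (fun h e => (hmeas _ _).sub (hmeas _ _)) (by positivity) hΔM hRint hRle hδ hgap
  rw [card_subtype_val_lt hTT, card_subtype_not_val_lt hTT, Fintype.card_fin,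
    Nat.cast_sub hTT] at hbound
  push_cast at hbound
  have : 0 ≤ Bw * Bφ * δ * (T1 + T2) := by positivity
  linarith

/-- low risk to low regret for E2TC: if the estimates `(w̄, θ̄)`
computed from the first `T₁ + T₂` exploration rounds satisfy the suboptimality-gap
bound `𝔯(w̄,θ̄) − 𝔯(w*,θ*) < ε` with probability at least `1 − δ`, and actions in
rounds `t > T₁ + T₂` are chosen greedily for the estimated model, then the expected
pseudo-regret is at most
`2B_wB_φTδ + 2B_wB_φ(T₁+T₂) + K(T−T₁−T₂)√ε`.

Here the probability space is `Ω = (Fin T → (Fin K → X)) × Ω_E`, where the first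
component carries the i.i.d. contexts (with per-action marginals `𝒟_X`) and `Ω_E`
carries all exploration randomness (random actions and reward noise); the estimates
depend only on the first `T₁ + T₂` contexts and `Ω_E`.  Since the reward noise `η_t`
does not depend on the chosen action, the pseudo-regret
`Σ_t (r_{t,A*_t} − r_{t,A_t})` coincides pointwise with
`Σ_t (w*ᵀφ_{θ*}(X_{t,A*_t}) − w*ᵀφ_{θ*}(X_{t,A_t}))`, which is used below, and the
suboptimality gap is expressed as `E_X[(w̄ᵀφ_{θ̄}(X) − w*ᵀφ_{θ*}(X))²]`. -/
theorem e2tc_low_risk_to_low_regret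
    {d d0 K T T1 T2 : ℕ} (hK : 0 < K) (hTT : T1 + T2 ≤ T)
    {X : Type*} [MeasurableSpace X]
    (DX : Measure X) [IsProbabilityMeasure DX]
    (DC : Measure (Fin K → X)) [IsProbabilityMeasure DC]
    (hmarg : ∀ a : Fin K, DC.map (fun c => c a) = DX)
    {ΩE : Type*} [MeasurableSpace ΩE] (PE : Measure ΩE) [IsProbabilityMeasure PE]
    (φ : (Fin d0 → ℝ) → X → Fin d → ℝ)
    (hφmeas : ∀ θ i, Measurable fun x => φ θ x i)
    (Bw Bθ Bφ : ℝ)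
    (wstar : Fin d → ℝ) (θstar : Fin d0 → ℝ)
    (hws : vnorm wstar ≤ Bw) (hθs : vnorm θstar ≤ Bθ)
    (hφb : ∀ θ, vnorm θ ≤ Bθ → ∀ x, vnorm (φ θ x) ≤ Bφ)
    (ε δ : ℝ) (hε : 0 ≤ ε) (hδ : 0 ≤ δ)
    (wbar : (Fin (T1 + T2) → (Fin K → X)) → ΩE → Fin d → ℝ)
    (θbar : (Fin (T1 + T2) → (Fin K → X)) → ΩE → Fin d0 → ℝ)
    (hwbarb : ∀ c e, vnorm (wbar c e) ≤ Bw)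
    (hθbarb : ∀ c e, vnorm (θbar c e) ≤ Bθ)
    (A : Fin T → (Fin T → Fin K → X) → ΩE → Fin K)
    (Astar : Fin T → (Fin T → Fin K → X) → Fin K)
    (hAstar : ∀ (t : Fin T) (c : Fin T → Fin K → X) (a : Fin K),
      wstar ⬝ᵥ φ θstar (c t a) ≤ wstar ⬝ᵥ φ θstar (c t (Astar t c)))
    (hgreedy : ∀ (t : Fin T), T1 + T2 ≤ (t : ℕ) →
      ∀ (c : Fin T → Fin K → X) (e : ΩE) (a : Fin K),
        wbar (fun i => c (Fin.castLE hTT i)) e ⬝ᵥ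
            φ (θbar (fun i => c (Fin.castLE hTT i)) e) (c t a) ≤
          wbar (fun i => c (Fin.castLE hTT i)) e ⬝ᵥ
            φ (θbar (fun i => c (Fin.castLE hTT i)) e) (c t (A t c e)))
    (R : (Fin T → Fin K → X) × ΩE → ℝ)
    (hR : ∀ p, R p = ∑ t : Fin T,
      (wstar ⬝ᵥ φ θstar (p.1 t (Astar t p.1)) -
        wstar ⬝ᵥ φ θstar (p.1 t (A t p.1 p.2))))
    (hRint : Integrable R ((Measure.pi fun _ : Fin T => DC).prod PE))
    (hgap : ((Measure.pi fun _ : Fin T => DC).prod PE)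
        {p : (Fin T → Fin K → X) × ΩE |
          (∫ x, (wbar (fun i => p.1 (Fin.castLE hTT i)) p.2 ⬝ᵥ
                φ (θbar (fun i => p.1 (Fin.castLE hTT i)) p.2) x -
              wstar ⬝ᵥ φ θstar x) ^ 2 ∂DX) < ε}
      ≥ ENNReal.ofReal (1 - δ)) :
    ∫ p, R p ∂((Measure.pi fun _ : Fin T => DC).prod PE) ≤
      2 * Bw * Bφ * T * δ + 2 * Bw * Bφ * (T1 + T2) +
        K * ((T : ℝ) - T1 - T2) * Real.sqrt ε :=
  e2tc_low_risk_to_low_regret_general hTT DX DC hmarg PE φ hφmeas Bw Bθ Bφ wstar θstar hws hθs hφb ε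
    δ hδ wbar θbar hwbarb hθbarb A Astar hgreedy R hR hRint hgap
end

section
/- For any points X₁,…,X_{T₁} ∈ X and any λ > 0, the following deterministic inequality holds: ‖(1/T₁) Σ_{t=1}^{T₁} φ_{θ₀}(X_t) Δφ(X_t)ᵀ w*‖_{Σ̂_λ⁻¹} ≤ √d · ‖w*‖_{Σ̂_δ}, where Σ̂_λ = (1/T₁)Σ_{t=1}^{T₁} φ_{θ₀}(X_t)φ_{θ₀}(X_t)ᵀ + λI and Σ̂_δ = (1/T₁)Σ_{t=1}^{T₁} Δφ(X_t)Δφ(X_t)ᵀ. -/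
open Matrix

/-- Matrix-weighted (semi-)norm `‖v‖_M = √(vᵀ M v)`. -/
noncomputable def mnorm {n : ℕ} (M : Matrix (Fin n) (Fin n) ℝ) (v : Fin n → ℝ) : ℝ :=
  Real.sqrt (v ⬝ᵥ (M *ᵥ v))

namespace Matrix

variable {n ι : Type*} [Fintype n] [Fintype ι]

theorem dotProduct_sum_vecMulVec_self_mulVec (ψ : ι → n → ℝ) (x : n → ℝ) :
    x ⬝ᵥ ((∑ t, vecMulVec (ψ t) (ψ t)) *ᵥ x) = ∑ t, (ψ t ⬝ᵥ x) ^ 2 := by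
  simp only [dotProduct_comm x, sum_mulVec, vecMulVec_mulVec, op_smul_eq_smul, sum_dotProduct,
    smul_dotProduct, smul_eq_mul, sq]

theorem posSemidef_sum_vecMulVec_self (ψ : ι → n → ℝ) :
    (∑ t, vecMulVec (ψ t) (ψ t)).PosSemidef :=
  posSemidef_sum _ fun t _ => by simpa using posSemidef_vecMulVec_self_star (ψ t)

theorem dotProduct_inv_mulVec_le [DecidableEq n] {M : Matrix n n ℝ} (hM : IsUnit M.det)
    {v : n → ℝ} {S : ℝ} (hS : 0 ≤ S) (h : ∀ x, (v ⬝ᵥ x) ^ 2 ≤ S * (x ⬝ᵥ (M *ᵥ x))) :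
    v ⬝ᵥ (M⁻¹ *ᵥ v) ≤ S := by
  set u := M⁻¹ *ᵥ v
  have hMu : M *ᵥ u = v := by rw [mulVec_mulVec, mul_nonsing_inv _ hM, one_mulVec]
  have hq : (v ⬝ᵥ u) ^ 2 ≤ S * (v ⬝ᵥ u) := by
    simpa only [hMu, dotProduct_comm u v] using h u
  nlinarith

theorem dotProduct_smul_sum_smul_sq_le (ψ : ι → n → ℝ) (a : ι → ℝ) (c : ℝ) (x : n → ℝ) :
    ((c • ∑ t, a t • ψ t) ⬝ᵥ x) ^ 2 ≤ (c * ∑ t, a t ^ 2) * (c * ∑ t, (ψ t ⬝ᵥ x) ^ 2) := by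
  simp only [smul_dotProduct, sum_dotProduct, smul_eq_mul]
  calc (c * ∑ t, a t * (ψ t ⬝ᵥ x)) ^ 2 = c ^ 2 * (∑ t, a t * (ψ t ⬝ᵥ x)) ^ 2 := by ring
    _ ≤ c ^ 2 * ((∑ t, a t ^ 2) * ∑ t, (ψ t ⬝ᵥ x) ^ 2) := by
      gcongr; exact Finset.sum_mul_sq_le_sq_mul_sq _ _ _
    _ = _ := by ring

end Matrix

theorem mnorm_smul_sum_vecMulVec_self {d : ℕ} {ι : Type*} [Fintype ι] (δ : ι → Fin d → ℝ)
    (c : ℝ) (w : Fin d → ℝ) :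
    mnorm (c • ∑ t, vecMulVec (δ t) (δ t)) w = √(c * ∑ t, (δ t ⬝ᵥ w) ^ 2) := by
  rw [mnorm, smul_mulVec, dotProduct_smul, dotProduct_sum_vecMulVec_self_mulVec, smul_eq_mul]

theorem mnorm_inv_smul_sum_vecMulVec_add_smul_one_le {d : ℕ} {ι : Type*} [Fintype ι]
    (ψ : ι → Fin d → ℝ) (a : ι → ℝ) {c lam : ℝ} (hc : 0 ≤ c) (hlam : 0 < lam) :
    mnorm (c • ∑ t, vecMulVec (ψ t) (ψ t) + lam • 1)⁻¹ (c • ∑ t, a t • ψ t)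
      ≤ √(c * ∑ t, a t ^ 2) := by
  have hM : (c • ∑ t, vecMulVec (ψ t) (ψ t) + lam • (1 : Matrix (Fin d) (Fin d) ℝ)).PosDef :=
    PosDef.posSemidef_add ((posSemidef_sum_vecMulVec_self ψ).smul hc) (PosDef.one.smul hlam)
  refine Real.sqrt_le_sqrt <| dotProduct_inv_mulVec_le ((isUnit_iff_isUnit_det _).mp hM.isUnit)
    (by positivity) fun x => ?_
  refine (dotProduct_smul_sum_smul_sq_le ψ a c x).trans <|
    mul_le_mul_of_nonneg_left ?_ (by positivity)
  rw [add_mulVec, dotProduct_add, smul_mulVec, dotProduct_smul,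
    dotProduct_sum_vecMulVec_self_mulVec, smul_mulVec, one_mulVec, dotProduct_smul, smul_eq_mul,
    smul_eq_mul]
  have hx : 0 ≤ x ⬝ᵥ x := by simpa using dotProduct_self_star_nonneg x
  nlinarith

theorem misspec_term_le_sqrt_d_mul_norm_general
    {d d0 : ℕ} {X : Type*}
    (φ : (Fin d0 → ℝ) → X → Fin d → ℝ)
    (wstar : Fin d → ℝ) (θstar θ0 : Fin d0 → ℝ)
    (T1 : ℕ) (Xs : Fin T1 → X)
    (lam : ℝ) (hlam : 0 < lam) :
    mnorm (((T1 : ℝ)⁻¹ • ∑ t : Fin T1,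
        vecMulVec (φ θ0 (Xs t)) (φ θ0 (Xs t))) + lam • (1 : Matrix (Fin d) (Fin d) ℝ))⁻¹
      ((T1 : ℝ)⁻¹ • ∑ t : Fin T1, ((φ θstar (Xs t) - φ θ0 (Xs t)) ⬝ᵥ wstar) • φ θ0 (Xs t))
      ≤ Real.sqrt d *
        mnorm ((T1 : ℝ)⁻¹ • ∑ t : Fin T1,
          vecMulVec (φ θstar (Xs t) - φ θ0 (Xs t)) (φ θstar (Xs t) - φ θ0 (Xs t))) wstar := by
  rcases Nat.eq_zero_or_pos d with rfl | hd
  · simp [mnorm]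
  rw [mnorm_smul_sum_vecMulVec_self]
  calc _ ≤ √((T1 : ℝ)⁻¹ * ∑ t, ((φ θstar (Xs t) - φ θ0 (Xs t)) ⬝ᵥ wstar) ^ 2) :=
        mnorm_inv_smul_sum_vecMulVec_add_smul_one_le _ _ (by positivity) hlam
    _ ≤ _ :=
      le_mul_of_one_le_left (Real.sqrt_nonneg _) (Real.one_le_sqrt.mpr (by exact_mod_cast hd))

/-- deterministic inequality
`‖(1/T₁) Σ_t φ_{θ₀}(X_t) Δφ(X_t)ᵀ w*‖_{Σ̂_λ⁻¹} ≤ √d ‖w*‖_{Σ̂_δ}`. -/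
theorem misspec_term_le_sqrt_d_mul_norm
    {d d0 : ℕ} {X : Type*}
    (φ : (Fin d0 → ℝ) → X → Fin d → ℝ)
    (wstar : Fin d → ℝ) (θstar θ0 : Fin d0 → ℝ)
    (T1 : ℕ) (hT1 : 0 < T1) (Xs : Fin T1 → X)
    (lam : ℝ) (hlam : 0 < lam) :
    mnorm (((T1 : ℝ)⁻¹ • ∑ t : Fin T1,
        vecMulVec (φ θ0 (Xs t)) (φ θ0 (Xs t))) + lam • (1 : Matrix (Fin d) (Fin d) ℝ))⁻¹
      ((T1 : ℝ)⁻¹ • ∑ t : Fin T1, ((φ θstar (Xs t) - φ θ0 (Xs t)) ⬝ᵥ wstar) • φ θ0 (Xs t))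
      ≤ Real.sqrt d *
        mnorm ((T1 : ℝ)⁻¹ • ∑ t : Fin T1,
          vecMulVec (φ θstar (Xs t) - φ θ0 (Xs t)) (φ θstar (Xs t) - φ θ0 (Xs t))) wstar :=
  misspec_term_le_sqrt_d_mul_norm_general φ wstar θstar θ0 T1 Xs lam hlam
end

section
/- (Bounded misspecification.) For every x ∈ X and every λ > 0, δ_ms := ‖Σ_λ^{−1/2} φ_{θ₀}(x) (w*ᵀφ_{θ*}(x) − w^λᵀφ_{θ₀}(x))‖ / √(d_{1,λ}) ≤ b_λ, where b_λ = (1 + 2√2) B_w B_φ² / √(d_{1,λ} λ) + (2 + √2) B_φ² ε₀ / λ and d_{1,λ} = Σ_{j=1}^{d} λ_j/(λ_j+λ). -/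
open MeasureTheory Matrix Real

lemma dot_self_nonneg {n : ℕ} (v : Fin n → ℝ) : 0 ≤ v ⬝ᵥ v :=
  Finset.sum_nonneg fun _ _ => mul_self_nonneg _

lemma sq_vnorm {n : ℕ} (v : Fin n → ℝ) : vnorm v ^ 2 = v ⬝ᵥ v :=
  Real.sq_sqrt (dot_self_nonneg v)

lemma vnorm_nonneg {n : ℕ} (v : Fin n → ℝ) : 0 ≤ vnorm v := Real.sqrt_nonneg _

lemma abs_dot_le {n : ℕ} (a b : Fin n → ℝ) : |a ⬝ᵥ b| ≤ vnorm a * vnorm b := by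
  have h := Finset.sum_mul_sq_le_sq_mul_sq Finset.univ a b
  have h2 : (a ⬝ᵥ b) ^ 2 ≤ (vnorm a * vnorm b) ^ 2 := by
    rw [mul_pow, sq_vnorm, sq_vnorm]
    simpa [dotProduct, pow_two, Finset.mul_sum] using h
  have h3 : |a ⬝ᵥ b| = Real.sqrt ((a ⬝ᵥ b) ^ 2) := (Real.sqrt_sq_eq_abs _).symm
  rw [h3]
  calc Real.sqrt ((a ⬝ᵥ b) ^ 2) ≤ Real.sqrt ((vnorm a * vnorm b) ^ 2) := Real.sqrt_le_sqrt h2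
    _ = vnorm a * vnorm b := Real.sqrt_sq (mul_nonneg (vnorm_nonneg a) (vnorm_nonneg b))

lemma integrable_of_bnd {X : Type*} [MeasurableSpace X] (DX : Measure X)
    [IsProbabilityMeasure DX] {f : X → ℝ} (hm : Measurable f) (C : ℝ)
    (h : ∀ x, |f x| ≤ C) : Integrable f DX :=
  ⟨hm.aestronglyMeasurable, HasFiniteIntegral.of_bounded (C := C) (ae_of_all _ (by simpa using h))⟩

lemma integral_CS {X : Type*} [MeasurableSpace X] (DX : Measure X) [IsProbabilityMeasure DX]
    {f g : X → ℝ} (hf2 : Integrable (fun x => f x ^ 2) DX)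
    (hg2 : Integrable (fun x => g x ^ 2) DX) (hfg : Integrable (fun x => f x * g x) DX) :
    (∫ x, f x * g x ∂DX) ^ 2 ≤ (∫ x, f x ^ 2 ∂DX) * ∫ x, g x ^ 2 ∂DX := by
  set A := ∫ x, f x ^ 2 ∂DX
  set B := ∫ x, f x * g x ∂DX
  set C := ∫ x, g x ^ 2 ∂DX
  have hA : 0 ≤ A := integral_nonneg fun x => sq_nonneg _
  have hC : 0 ≤ C := integral_nonneg fun x => sq_nonneg _
  have key : ∀ t : ℝ, 0 ≤ t ^ 2 * A + 2 * t * B + C := by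
    intro t
    have h0 : 0 ≤ ∫ x, (t * f x + g x) ^ 2 ∂DX := integral_nonneg fun x => sq_nonneg _
    calc (0:ℝ) ≤ ∫ x, (t * f x + g x) ^ 2 ∂DX := h0
      _ = t ^ 2 * A + 2 * t * B + C := by
        have he : ∀ x, (t * f x + g x) ^ 2 = t ^ 2 * f x ^ 2 + 2 * t * (f x * g x) + g x ^ 2 := by
          intro x; ring
        simp_rw [he]
        rw [integral_add (by exact (hf2.const_mul _).add (hfg.const_mul _)) hg2,
          integral_add (hf2.const_mul _) (hfg.const_mul _),
          integral_const_mul, integral_const_mul]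
  rcases eq_or_lt_of_le hA with hA0 | hApos
  · have hB : B = 0 := by
      by_contra hB
      have h1 := key (-(C + 1) / (2 * B))
      rw [← hA0] at h1
      have h2 : 2 * (-(C + 1) / (2 * B)) * B = -(C + 1) := by field_simp
      nlinarith
    simp [hB, ← hA0]
  · have h1 := key (-B / A)
    have hAne : A ≠ 0 := ne_of_gt hApos
    have e : (-B/A)^2 * A + 2 * (-B/A) * B + C = C - B^2/A := by field_simp; ring
    rw [e] at h1
    have h2 : B ^ 2 / A ≤ C := by linarith
    calc B ^ 2 = B ^ 2 / A * A := by field_simp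
      _ ≤ C * A := mul_le_mul_of_nonneg_right h2 hA
      _ = A * C := mul_comm _ _

lemma num1 {Bw Bφ : ℝ} (hBw : 0 ≤ Bw) (hBφ : 0 ≤ Bφ) :
    3*(Bw*Bφ^2) ≤ (1 + 2*Real.sqrt 2)*Bw*Bφ^2 := by
  have h2 : (1:ℝ) ≤ Real.sqrt 2 := by
    rw [show (1:ℝ) = Real.sqrt 1 from (Real.sqrt_one).symm]
    exact Real.sqrt_le_sqrt (by norm_num)
  nlinarith [mul_nonneg (mul_nonneg (sub_nonneg.mpr h2) hBw) (sq_nonneg Bφ)]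

lemma num2 {Bφ ε0 : ℝ} (hε : 0 ≤ ε0) :
    ε0*Bφ^2 ≤ (2 + Real.sqrt 2)*Bφ^2*ε0 := by
  have h2 : (1:ℝ) ≤ Real.sqrt 2 := by
    rw [show (1:ℝ) = Real.sqrt 1 from (Real.sqrt_one).symm]
    exact Real.sqrt_le_sqrt (by norm_num)
  nlinarith [mul_nonneg (sq_nonneg Bφ) hε,
    mul_nonneg (mul_nonneg (Real.sqrt_nonneg 2) (sq_nonneg Bφ)) hε]

/-- bounded misspecification: for every `x ∈ X` and `λ > 0`,
`δ_ms = ‖Σ_λ^{−1/2} φ_{θ₀}(x)(w*ᵀφ_{θ*}(x) − w^λᵀφ_{θ₀}(x))‖ / √d_{1,λ} ≤ b_λ`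
with `b_λ = (1+2√2) B_w B_φ²/√(d_{1,λ}λ) + (2+√2) B_φ² ε₀/λ`. -/
theorem bounded_misspecification
    {d d0 : ℕ} {X : Type*} [MeasurableSpace X]
    (DX : Measure X) [IsProbabilityMeasure DX]
    (φ : (Fin d0 → ℝ) → X → Fin d → ℝ)
    (hφmeas : ∀ θ i, Measurable fun x => φ θ x i)
    (Bw Bθ Bφ : ℝ)
    (wstar : Fin d → ℝ) (θstar θ0 : Fin d0 → ℝ)
    (hws : vnorm wstar ≤ Bw) (hθs : vnorm θstar ≤ Bθ) (hθ0 : vnorm θ0 ≤ Bθ)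
    (hφb : ∀ θ, vnorm θ ≤ Bθ → ∀ x, vnorm (φ θ x) ≤ Bφ)
    (Sig0 M : Matrix (Fin d) (Fin d) ℝ)
    (hSig0 : Sig0 = Matrix.of fun i j => ∫ x, φ θ0 x i * φ θ0 x j ∂DX)
    (hM : M = Matrix.of fun i j => ∫ x, φ θ0 x i * φ θstar x j ∂DX)
    (lamreg : ℝ) (hlam : 0 < lamreg)
    (lamj : Fin d → ℝ) (vj : Fin d → Fin d → ℝ)
    (heig : ∀ i, Sig0 *ᵥ vj i = lamj i • vj i)
    (horth : ∀ i k, vj i ⬝ᵥ vj k = if i = k then 1 else 0)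
    (ε0 : ℝ) (hε0 : 0 ≤ ε0)
    (hε0sq : ε0 ^ 2 = ∫ x, (wstar ⬝ᵥ (φ θstar x - φ θ0 x)) ^ 2 ∂DX)
    (wlam : Fin d → ℝ)
    (hwlam : wlam = (Sig0 + lamreg • (1 : Matrix (Fin d) (Fin d) ℝ))⁻¹ *ᵥ (M *ᵥ wstar))
    (x : X) :
    mnorm (Sig0 + lamreg • (1 : Matrix (Fin d) (Fin d) ℝ))⁻¹
        ((wstar ⬝ᵥ φ θstar x - wlam ⬝ᵥ φ θ0 x) • φ θ0 x) /
        Real.sqrt (∑ j : Fin d, lamj j / (lamj j + lamreg)) ≤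
      (1 + 2 * Real.sqrt 2) * Bw * Bφ ^ 2 /
          Real.sqrt ((∑ j : Fin d, lamj j / (lamj j + lamreg)) * lamreg) +
        (2 + Real.sqrt 2) * Bφ ^ 2 * ε0 / lamreg := by
  -- basic nonnegativity
  have hBφ0 : 0 ≤ Bφ := le_trans (vnorm_nonneg _) (hφb θ0 hθ0 x)
  have hBw0 : 0 ≤ Bw := le_trans (vnorm_nonneg _) hws
  have hφ0b : ∀ y, vnorm (φ θ0 y) ≤ Bφ := hφb θ0 hθ0
  have hφsb : ∀ y, vnorm (φ θstar y) ≤ Bφ := hφb θstar hθs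
  -- eigenvector norms
  have hvnorm : ∀ j, vnorm (vj j) = 1 := by
    intro j; rw [vnorm, horth j j]; simp
  -- dot product bounds
  have hdotφ0 : ∀ (v : Fin d → ℝ) y, |v ⬝ᵥ φ θ0 y| ≤ vnorm v * Bφ := fun v y =>
    le_trans (abs_dot_le _ _) (mul_le_mul_of_nonneg_left (hφ0b y) (vnorm_nonneg v))
  have hdotφs : ∀ (v : Fin d → ℝ) y, |v ⬝ᵥ φ θstar y| ≤ vnorm v * Bφ := fun v y =>
    le_trans (abs_dot_le _ _) (mul_le_mul_of_nonneg_left (hφsb y) (vnorm_nonneg v))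
  -- the misspecification function
  set g : X → ℝ := fun y => wstar ⬝ᵥ (φ θstar y - φ θ0 y) with hg
  have hgmeas : Measurable g := by
    apply Finset.measurable_sum
    intro i _
    exact (((hφmeas θstar i).sub (hφmeas θ0 i)).const_mul _)
  have hgbnd : ∀ y, |g y| ≤ 2 * (Bw * Bφ) := by
    intro y
    have : g y = wstar ⬝ᵥ φ θstar y - wstar ⬝ᵥ φ θ0 y := by simp only [hg]; rw [dotProduct_sub]
    rw [this]
    have h1 : |wstar ⬝ᵥ φ θstar y| ≤ Bw * Bφ :=
      le_trans (hdotφs wstar y) (mul_le_mul_of_nonneg_right hws hBφ0)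
    have h2 : |wstar ⬝ᵥ φ θ0 y| ≤ Bw * Bφ :=
      le_trans (hdotφ0 wstar y) (mul_le_mul_of_nonneg_right hws hBφ0)
    calc |wstar ⬝ᵥ φ θstar y - wstar ⬝ᵥ φ θ0 y| ≤ _ := abs_sub _ _
      _ ≤ 2 * (Bw * Bφ) := by linarith
  -- measurability of dot products with φ
  have hdotmeas : ∀ (θ : Fin d0 → ℝ) (v : Fin d → ℝ), Measurable fun y => v ⬝ᵥ φ θ y := by
    intro θ v
    apply Finset.measurable_sum
    intro i _
    exact ((hφmeas θ i).const_mul _)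
  -- entrywise bounds
  have hentry0 : ∀ y i, |φ θ0 y i| ≤ Bφ := by
    intro y i
    refine le_trans ?_ (hφ0b y)
    rw [vnorm, ← Real.sqrt_sq_eq_abs]
    apply Real.sqrt_le_sqrt
    simpa [pow_two, dotProduct] using
      Finset.single_le_sum (f := fun k => φ θ0 y k * φ θ0 y k)
        (fun k _ => mul_self_nonneg _) (Finset.mem_univ i)
  have hentrys : ∀ y i, |φ θstar y i| ≤ Bφ := by
    intro y i
    refine le_trans ?_ (hφsb y)
    rw [vnorm, ← Real.sqrt_sq_eq_abs]
    apply Real.sqrt_le_sqrt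
    simpa [pow_two, dotProduct] using
      Finset.single_le_sum (f := fun k => φ θstar y k * φ θstar y k)
        (fun k _ => mul_self_nonneg _) (Finset.mem_univ i)
  -- generic integrable product
  have hIprod : ∀ {f1 f2 : X → ℝ}, Measurable f1 → Measurable f2 → ∀ C1 C2 : ℝ,
      (∀ y, |f1 y| ≤ C1) → (∀ y, |f2 y| ≤ C2) →
      Integrable (fun y => f1 y * f2 y) DX := by
    intro f1 f2 m1 m2 C1 C2 b1 b2
    exact integrable_of_bnd DX (m1.mul m2) (C1 * C2) fun y => by
      rw [abs_mul]
      exact mul_le_mul (b1 y) (b2 y) (abs_nonneg _) (le_trans (abs_nonneg _) (b1 y))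
  -- quadratic form against Sig0 as an integral
  have hquad : ∀ v w : Fin d → ℝ,
      v ⬝ᵥ (Sig0 *ᵥ w) = ∫ y, (v ⬝ᵥ φ θ0 y) * (w ⬝ᵥ φ θ0 y) ∂DX := by
    intro v w
    have hrhs : ∀ y, (v ⬝ᵥ φ θ0 y) * (w ⬝ᵥ φ θ0 y)
        = ∑ i : Fin d, ∑ k : Fin d, (v i * w k) * (φ θ0 y i * φ θ0 y k) := by
      intro y
      rw [dotProduct, dotProduct, Finset.sum_mul_sum]
      exact Finset.sum_congr rfl fun i _ => Finset.sum_congr rfl fun k _ => by ring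
    have hIik : ∀ i k : Fin d,
        Integrable (fun y => (v i * w k) * (φ θ0 y i * φ θ0 y k)) DX :=
      fun i k => (hIprod (hφmeas θ0 i) (hφmeas θ0 k) Bφ Bφ (fun y => hentry0 y i)
        (fun y => hentry0 y k)).const_mul _
    calc v ⬝ᵥ (Sig0 *ᵥ w)
        = ∑ i : Fin d, ∑ k : Fin d, (v i * w k) * ∫ y, φ θ0 y i * φ θ0 y k ∂DX := by
          rw [hSig0]
          simp only [dotProduct, mulVec, Matrix.of_apply, Finset.mul_sum]
          exact Finset.sum_congr rfl fun i _ => Finset.sum_congr rfl fun k _ => by ring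
      _ = ∑ i : Fin d, ∑ k : Fin d, ∫ y, (v i * w k) * (φ θ0 y i * φ θ0 y k) ∂DX := by
          exact Finset.sum_congr rfl fun i _ => Finset.sum_congr rfl fun k _ =>
            (integral_const_mul _ _).symm
      _ = ∫ y, ∑ i : Fin d, ∑ k : Fin d, (v i * w k) * (φ θ0 y i * φ θ0 y k) ∂DX := by
          rw [integral_finset_sum _ (fun i _ => integrable_finset_sum _ (fun k _ => hIik i k))]
          exact Finset.sum_congr rfl fun i _ => (integral_finset_sum _ (fun k _ => hIik i k)).symm
      _ = ∫ y, (v ⬝ᵥ φ θ0 y) * (w ⬝ᵥ φ θ0 y) ∂DX := by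
          simp_rw [← hrhs]
  -- eigenvalues are nonnegative
  have hlamj : ∀ j, lamj j = ∫ y, (vj j ⬝ᵥ φ θ0 y) ^ 2 ∂DX := by
    intro j
    have h1 : vj j ⬝ᵥ (Sig0 *ᵥ vj j) = lamj j := by
      rw [heig j, dotProduct_smul, smul_eq_mul, horth j j]; simp
    rw [← h1, hquad (vj j) (vj j)]
    simp_rw [pow_two]
  have hlamj0 : ∀ j, 0 ≤ lamj j := fun j => by
    rw [hlamj j]; exact integral_nonneg fun y => sq_nonneg _
  have hμpos : ∀ j, 0 < lamj j + lamreg := fun j => by linarith [hlamj0 j]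
  have hμne : ∀ j, lamj j + lamreg ≠ 0 := fun j => ne_of_gt (hμpos j)
  -- the eigenvector matrix
  set V : Matrix (Fin d) (Fin d) ℝ := Matrix.of vj with hV
  have hVapp : ∀ (a : Fin d → ℝ) j, (V *ᵥ a) j = vj j ⬝ᵥ a := fun a j => rfl
  have hVVt : V * Vᵀ = 1 := by
    ext j k
    simp only [Matrix.mul_apply, Matrix.transpose_apply, Matrix.one_apply, hV, Matrix.of_apply]
    simpa [dotProduct] using horth j k
  have hVtV : Vᵀ * V = 1 := mul_eq_one_comm.mp hVVt
  set N : Matrix (Fin d) (Fin d) ℝ :=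
    Vᵀ * Matrix.diagonal (fun j => (lamj j + lamreg)⁻¹) * V with hN
  set Sl := Sig0 + lamreg • (1 : Matrix (Fin d) (Fin d) ℝ) with hSl
  -- Sl * N = 1
  have hSlV : Sl * Vᵀ = Vᵀ * Matrix.diagonal (fun j => lamj j + lamreg) := by
    ext i j
    have h1 : Sl *ᵥ vj j = (lamj j + lamreg) • vj j := by
      rw [hSl, Matrix.add_mulVec, heig j, Matrix.smul_mulVec, Matrix.one_mulVec, add_smul]
    have h2 : (Sl * Vᵀ) i j = (Sl *ᵥ vj j) i := by
      simp [Matrix.mul_apply, Matrix.mulVec, dotProduct, Matrix.transpose_apply, hV]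
    rw [h2, h1, Matrix.mul_diagonal]
    simp [hV, mul_comm]
  have hinv_mul : Sl * N = 1 := by
    rw [hN, ← Matrix.mul_assoc, ← Matrix.mul_assoc, hSlV, Matrix.mul_assoc Vᵀ,
      Matrix.diagonal_mul_diagonal]
    have : (fun j => (lamj j + lamreg) * (lamj j + lamreg)⁻¹) = fun _ => (1:ℝ) := by
      funext j; exact mul_inv_cancel₀ (hμne j)
    rw [this, Matrix.diagonal_one, Matrix.mul_one, hVtV]
  have hNinv : Sl⁻¹ = N := Matrix.inv_eq_right_inv hinv_mul
  -- quadratic form of N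
  have hquadN : ∀ a b : Fin d → ℝ, a ⬝ᵥ (N *ᵥ b)
      = ∑ j, (lamj j + lamreg)⁻¹ * ((vj j ⬝ᵥ a) * (vj j ⬝ᵥ b)) := by
    intro a b
    rw [hN, ← Matrix.mulVec_mulVec, ← Matrix.mulVec_mulVec, Matrix.dotProduct_mulVec,
      Matrix.vecMul_transpose]
    simp only [dotProduct, Matrix.mulVec_diagonal, hVapp]
    exact Finset.sum_congr rfl fun j _ => by ring
  -- Parseval
  have hpars : ∀ a : Fin d → ℝ, ∑ j, (vj j ⬝ᵥ a) * (vj j ⬝ᵥ a) = a ⬝ᵥ a := by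
    intro a
    have h1 : ∑ j, (vj j ⬝ᵥ a) * (vj j ⬝ᵥ a) = (V *ᵥ a) ⬝ᵥ (V *ᵥ a) := by
      simp only [dotProduct, hVapp]
    rw [h1, Matrix.dotProduct_mulVec]
    have h2 : (V *ᵥ a) ᵥ* V = Vᵀ *ᵥ (V *ᵥ a) := by
      conv_lhs => rw [← Matrix.transpose_transpose V, Matrix.vecMul_transpose]
      rw [Matrix.transpose_transpose]
    rw [h2, Matrix.mulVec_mulVec, hVtV, Matrix.one_mulVec]
  -- integrable g^2
  have hIg2 : Integrable (fun y => g y ^ 2) DX := by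
    have h := hIprod hgmeas hgmeas (2*(Bw*Bφ)) (2*(Bw*Bφ)) hgbnd hgbnd
    simpa [pow_two] using h
  -- the vector u
  set u : Fin d → ℝ := fun i => ∫ y, g y * φ θ0 y i ∂DX with hu
  have hwφs : ∀ y, |wstar ⬝ᵥ φ θstar y| ≤ Bw * Bφ := fun y =>
    le_trans (hdotφs wstar y) (mul_le_mul_of_nonneg_right hws hBφ0)
  have hwφ0 : ∀ y, |wstar ⬝ᵥ φ θ0 y| ≤ Bw * Bφ := fun y =>
    le_trans (hdotφ0 wstar y) (mul_le_mul_of_nonneg_right hws hBφ0)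
  have hMw : ∀ i, (M *ᵥ wstar) i = ∫ y, φ θ0 y i * (wstar ⬝ᵥ φ θstar y) ∂DX := by
    intro i
    have he : ∀ y, φ θ0 y i * (wstar ⬝ᵥ φ θstar y)
        = ∑ j, (φ θ0 y i * φ θstar y j) * wstar j := by
      intro y
      rw [dotProduct, Finset.mul_sum]
      exact Finset.sum_congr rfl fun j _ => by ring
    simp_rw [he]
    rw [integral_finset_sum _ (fun j _ => (hIprod (hφmeas θ0 i) (hφmeas θstar j) Bφ Bφ
      (fun y => hentry0 y i) (fun y => hentrys y j)).mul_const _)]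
    rw [hM]
    simp only [Matrix.mulVec, dotProduct, Matrix.of_apply]
    exact Finset.sum_congr rfl fun j _ => (integral_mul_const _ _).symm
  have hSw : ∀ i, (Sig0 *ᵥ wstar) i = ∫ y, φ θ0 y i * (wstar ⬝ᵥ φ θ0 y) ∂DX := by
    intro i
    have he : ∀ y, φ θ0 y i * (wstar ⬝ᵥ φ θ0 y)
        = ∑ j, (φ θ0 y i * φ θ0 y j) * wstar j := by
      intro y
      rw [dotProduct, Finset.mul_sum]
      exact Finset.sum_congr rfl fun j _ => by ring
    simp_rw [he]
    rw [integral_finset_sum _ (fun j _ => (hIprod (hφmeas θ0 i) (hφmeas θ0 j) Bφ Bφ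
      (fun y => hentry0 y i) (fun y => hentry0 y j)).mul_const _)]
    rw [hSig0]
    simp only [Matrix.mulVec, dotProduct, Matrix.of_apply]
    exact Finset.sum_congr rfl fun j _ => (integral_mul_const _ _).symm
  have hdecomp : M *ᵥ wstar = Sig0 *ᵥ wstar + u := by
    funext i
    rw [Pi.add_apply, hMw i, hSw i]
    have hui : u i = ∫ y, g y * φ θ0 y i ∂DX := by rw [hu]
    rw [hui, ← integral_add (hIprod (hφmeas θ0 i) (hdotmeas θ0 wstar) Bφ (Bw*Bφ)
        (fun y => hentry0 y i) hwφ0)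
      (hIprod hgmeas (hφmeas θ0 i) (2*(Bw*Bφ)) Bφ hgbnd (fun y => hentry0 y i))]
    congr 1
    funext y
    simp only [hg, dotProduct_sub]
    ring
  have hvφ0 : ∀ j y, |vj j ⬝ᵥ φ θ0 y| ≤ Bφ := fun j y => by
    have h := hdotφ0 (vj j) y; rwa [hvnorm j, one_mul] at h
  have hRj : ∀ j, vj j ⬝ᵥ u = ∫ y, g y * (vj j ⬝ᵥ φ θ0 y) ∂DX := by
    intro j
    have he : ∀ y, g y * (vj j ⬝ᵥ φ θ0 y) = ∑ i, vj j i * (g y * φ θ0 y i) := by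
      intro y; rw [dotProduct, Finset.mul_sum]
      exact Finset.sum_congr rfl fun i _ => by ring
    simp_rw [he]
    rw [integral_finset_sum _ (fun i _ => ((hIprod hgmeas (hφmeas θ0 i) (2*(Bw*Bφ)) Bφ hgbnd
      (fun y => hentry0 y i)).const_mul _))]
    simp only [dotProduct, hu]
    exact Finset.sum_congr rfl fun i _ => (integral_const_mul _ _).symm
  have hε0g : ε0 ^ 2 = ∫ y, g y ^ 2 ∂DX := hε0sq
  have hR2 : ∀ j, (vj j ⬝ᵥ u)^2 ≤ ε0^2 * lamj j := by
    intro j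
    rw [hRj j, hlamj j, hε0g]
    refine integral_CS DX hIg2 ?_
      (hIprod hgmeas (hdotmeas θ0 (vj j)) (2*(Bw*Bφ)) Bφ hgbnd (hvφ0 j))
    have h := hIprod (hdotmeas θ0 (vj j)) (hdotmeas θ0 (vj j)) Bφ Bφ (hvφ0 j) (hvφ0 j)
    simpa [pow_two] using h
  -- symmetry facts and the key identity for c
  have hNsym : ∀ z w : Fin d → ℝ, (N *ᵥ z) ⬝ᵥ w = z ⬝ᵥ (N *ᵥ w) := by
    intro z w
    rw [dotProduct_comm, hquadN, hquadN]
    exact Finset.sum_congr rfl fun j _ => by ring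
  have hSig0sym : Sig0ᵀ = Sig0 := by
    rw [hSig0]
    ext i j
    simp only [Matrix.transpose_apply, Matrix.of_apply]
    congr 1
    funext y
    ring
  have hSlsym : Slᵀ = Sl := by
    rw [hSl, Matrix.transpose_add, hSig0sym, Matrix.transpose_smul, Matrix.transpose_one]
  have hSlmul : ∀ z : Fin d → ℝ, (Sl *ᵥ z) ⬝ᵥ (N *ᵥ φ θ0 x) = z ⬝ᵥ φ θ0 x := by
    intro z
    rw [dotProduct_comm, Matrix.dotProduct_mulVec]
    have h2 : (N *ᵥ φ θ0 x) ᵥ* Sl = Sl *ᵥ (N *ᵥ φ θ0 x) := by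
      conv_lhs => rw [← hSlsym, Matrix.vecMul_transpose]
    rw [h2, Matrix.mulVec_mulVec, hinv_mul, Matrix.one_mulVec, dotProduct_comm]
  have hc : wstar ⬝ᵥ φ θstar x - wlam ⬝ᵥ φ θ0 x
      = g x + lamreg * (wstar ⬝ᵥ (N *ᵥ φ θ0 x)) - u ⬝ᵥ (N *ᵥ φ θ0 x) := by
    have h1 : wlam ⬝ᵥ φ θ0 x
        = wstar ⬝ᵥ φ θ0 x - lamreg * (wstar ⬝ᵥ (N *ᵥ φ θ0 x)) + u ⬝ᵥ (N *ᵥ φ θ0 x) := by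
      rw [hwlam, hNinv, hdecomp, hNsym, add_dotProduct]
      have h2 : Sig0 *ᵥ wstar = Sl *ᵥ wstar - lamreg • wstar := by
        rw [hSl, Matrix.add_mulVec, Matrix.smul_mulVec, Matrix.one_mulVec]
        abel
      rw [h2, sub_dotProduct, hSlmul wstar, smul_dotProduct, smul_eq_mul]
    rw [h1]
    have h3 : g x = wstar ⬝ᵥ φ θstar x - wstar ⬝ᵥ φ θ0 x := by
      simp only [hg]; rw [dotProduct_sub]
    rw [h3]; ring
  -- abbreviations for the final computation
  set c := wstar ⬝ᵥ φ θstar x - wlam ⬝ᵥ φ θ0 x with hcdef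
  set d1 := ∑ j : Fin d, lamj j / (lamj j + lamreg) with hd1
  set t := ∑ j, (lamj j + lamreg)⁻¹ * ((vj j ⬝ᵥ φ θ0 x) * (vj j ⬝ᵥ φ θ0 x)) with ht
  have ht0 : 0 ≤ t := Finset.sum_nonneg fun j _ =>
    mul_nonneg (inv_nonneg.mpr (hμpos j).le) (mul_self_nonneg _)
  have hd10 : 0 ≤ d1 := Finset.sum_nonneg fun j _ => div_nonneg (hlamj0 j) (hμpos j).le
  -- the matrix-weighted norm
  have hmn : mnorm Sl⁻¹ (c • φ θ0 x) = |c| * Real.sqrt t := by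
    rw [hNinv, mnorm]
    have h1 : (c • φ θ0 x) ⬝ᵥ (N *ᵥ (c • φ θ0 x)) = c^2 * t := by
      rw [Matrix.mulVec_smul, dotProduct_smul, smul_dotProduct, hquadN, ← ht,
        smul_eq_mul, smul_eq_mul]
      ring
    rw [h1, Real.sqrt_mul (sq_nonneg c), Real.sqrt_sq_eq_abs]
  -- generic bound for the weighted sums
  have hsum_le : ∀ a : Fin d → ℝ,
      (∑ j, (lamj j + lamreg)⁻¹ * ((vj j ⬝ᵥ a) * (vj j ⬝ᵥ a))) ≤ (a ⬝ᵥ a) / lamreg := by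
    intro a
    calc ∑ j, (lamj j + lamreg)⁻¹ * ((vj j ⬝ᵥ a) * (vj j ⬝ᵥ a))
        ≤ ∑ j, lamreg⁻¹ * ((vj j ⬝ᵥ a) * (vj j ⬝ᵥ a)) := by
          apply Finset.sum_le_sum
          intro j _
          exact mul_le_mul_of_nonneg_right
            (inv_anti₀ hlam (by linarith [hlamj0 j])) (mul_self_nonneg _)
      _ = (a ⬝ᵥ a) / lamreg := by rw [← Finset.mul_sum, hpars a, inv_mul_eq_div]
  have hφdot : φ θ0 x ⬝ᵥ φ θ0 x ≤ Bφ^2 := by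
    rw [← sq_vnorm]
    exact pow_le_pow_left₀ (vnorm_nonneg _) (hφ0b x) 2
  have htle : t ≤ Bφ^2 / lamreg := by
    rw [ht]
    refine le_trans (hsum_le _) ?_
    exact div_le_div_of_nonneg_right hφdot hlam.le
  -- Cauchy-Schwarz on the weighted sums
  have hCS : ∀ F : Fin d → ℝ, |∑ j, (lamj j + lamreg)⁻¹ * (F j * (vj j ⬝ᵥ φ θ0 x))|
      ≤ Real.sqrt (∑ j, (lamj j + lamreg)⁻¹ * (F j * F j)) * Real.sqrt t := by
    intro F
    have hA0 : 0 ≤ ∑ j, (lamj j + lamreg)⁻¹ * (F j * F j) :=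
      Finset.sum_nonneg fun j _ => mul_nonneg (inv_nonneg.mpr (hμpos j).le) (mul_self_nonneg _)
    have h := Finset.sum_mul_sq_le_sq_mul_sq Finset.univ
      (fun j => F j / Real.sqrt (lamj j + lamreg))
      (fun j => (vj j ⬝ᵥ φ θ0 x) / Real.sqrt (lamj j + lamreg))
    have eA : ∀ j : Fin d, F j / Real.sqrt (lamj j + lamreg)
        * ((vj j ⬝ᵥ φ θ0 x) / Real.sqrt (lamj j + lamreg))
        = (lamj j + lamreg)⁻¹ * (F j * (vj j ⬝ᵥ φ θ0 x)) := by
      intro j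
      rw [div_mul_div_comm, Real.mul_self_sqrt (hμpos j).le, div_eq_inv_mul]
    have eB : ∀ (G : Fin d → ℝ) (j : Fin d), (G j / Real.sqrt (lamj j + lamreg))^2
        = (lamj j + lamreg)⁻¹ * (G j * G j) := by
      intro G j
      rw [div_pow, Real.sq_sqrt (hμpos j).le, pow_two, div_eq_inv_mul]
    simp_rw [eA, eB F, eB (fun j => vj j ⬝ᵥ φ θ0 x)] at h
    have key : (∑ j, (lamj j + lamreg)⁻¹ * (F j * (vj j ⬝ᵥ φ θ0 x)))^2
        ≤ (∑ j, (lamj j + lamreg)⁻¹ * (F j * F j)) * t := by rw [ht]; exact h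
    calc |∑ j, (lamj j + lamreg)⁻¹ * (F j * (vj j ⬝ᵥ φ θ0 x))|
        = Real.sqrt ((∑ j, (lamj j + lamreg)⁻¹ * (F j * (vj j ⬝ᵥ φ θ0 x)))^2) :=
          (Real.sqrt_sq_eq_abs _).symm
      _ ≤ Real.sqrt ((∑ j, (lamj j + lamreg)⁻¹ * (F j * F j)) * t) := Real.sqrt_le_sqrt key
      _ = _ := Real.sqrt_mul hA0 t
  have hsqlam : 0 < Real.sqrt lamreg := Real.sqrt_pos.mpr hlam
  -- bound for the wstar term
  have hQ : |wstar ⬝ᵥ (N *ᵥ φ θ0 x)| ≤ (Bw / Real.sqrt lamreg) * Real.sqrt t := by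
    rw [hquadN]
    refine le_trans (hCS (fun j => vj j ⬝ᵥ wstar)) ?_
    apply mul_le_mul_of_nonneg_right _ (Real.sqrt_nonneg t)
    have h1 : (∑ j, (lamj j + lamreg)⁻¹ * ((vj j ⬝ᵥ wstar) * (vj j ⬝ᵥ wstar)))
        ≤ Bw^2 / lamreg := by
      refine le_trans (hsum_le wstar) (div_le_div_of_nonneg_right ?_ hlam.le)
      rw [← sq_vnorm]
      exact pow_le_pow_left₀ (vnorm_nonneg _) hws 2
    refine le_trans (Real.sqrt_le_sqrt h1) ?_
    rw [Real.sqrt_div (sq_nonneg Bw), Real.sqrt_sq hBw0]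
  -- bound for the u term
  have hRsum : (∑ j, (lamj j + lamreg)⁻¹ * ((vj j ⬝ᵥ u) * (vj j ⬝ᵥ u))) ≤ ε0^2 * d1 := by
    calc ∑ j, (lamj j + lamreg)⁻¹ * ((vj j ⬝ᵥ u) * (vj j ⬝ᵥ u))
        ≤ ∑ j, (lamj j + lamreg)⁻¹ * (ε0^2 * lamj j) := by
          apply Finset.sum_le_sum
          intro j _
          refine mul_le_mul_of_nonneg_left ?_ (inv_nonneg.mpr (hμpos j).le)
          have h := hR2 j
          rwa [pow_two] at h
      _ = ε0^2 * d1 := by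
          rw [hd1, Finset.mul_sum]
          exact Finset.sum_congr rfl fun j _ => by
            rw [div_eq_inv_mul]; ring
  have hRb : |u ⬝ᵥ (N *ᵥ φ θ0 x)| ≤ ε0 * Real.sqrt d1 * Real.sqrt t := by
    rw [hquadN]
    refine le_trans (hCS (fun j => vj j ⬝ᵥ u)) ?_
    apply mul_le_mul_of_nonneg_right _ (Real.sqrt_nonneg t)
    refine le_trans (Real.sqrt_le_sqrt hRsum) ?_
    rw [Real.sqrt_mul (sq_nonneg ε0), Real.sqrt_sq hε0]
  -- bound on |c|
  have habs : |c| ≤ 2*(Bw*Bφ) + lamreg * ((Bw / Real.sqrt lamreg) * Real.sqrt t)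
      + ε0 * Real.sqrt d1 * Real.sqrt t := by
    rw [hc]
    calc |g x + lamreg * (wstar ⬝ᵥ (N *ᵥ φ θ0 x)) - u ⬝ᵥ (N *ᵥ φ θ0 x)|
        ≤ |g x + lamreg * (wstar ⬝ᵥ (N *ᵥ φ θ0 x))| + |u ⬝ᵥ (N *ᵥ φ θ0 x)| := abs_sub _ _
      _ ≤ |g x| + |lamreg * (wstar ⬝ᵥ (N *ᵥ φ θ0 x))| + |u ⬝ᵥ (N *ᵥ φ θ0 x)| := by
          have := abs_add_le (g x) (lamreg * (wstar ⬝ᵥ (N *ᵥ φ θ0 x)))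
          linarith
      _ ≤ 2*(Bw*Bφ) + lamreg * ((Bw / Real.sqrt lamreg) * Real.sqrt t)
          + ε0 * Real.sqrt d1 * Real.sqrt t := by
          have h1 := hgbnd x
          have h2 : |lamreg * (wstar ⬝ᵥ (N *ᵥ φ θ0 x))|
              ≤ lamreg * ((Bw / Real.sqrt lamreg) * Real.sqrt t) := by
            rw [abs_mul, abs_of_pos hlam]
            exact mul_le_mul_of_nonneg_left hQ hlam.le
          linarith [hRb]
  -- bound on sqrt t
  have hst : Real.sqrt t ≤ Bφ / Real.sqrt lamreg := by
    refine le_trans (Real.sqrt_le_sqrt htle) ?_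
    rw [Real.sqrt_div (sq_nonneg Bφ), Real.sqrt_sq hBφ0]
  -- the numerator bound
  have hnum : |c| * Real.sqrt t
      ≤ 3*(Bw*Bφ^2) / Real.sqrt lamreg + ε0 * Real.sqrt d1 * (Bφ^2/lamreg) := by
    have step1 : |c| * Real.sqrt t
        ≤ (2*(Bw*Bφ) + lamreg * ((Bw / Real.sqrt lamreg) * Real.sqrt t)
          + ε0 * Real.sqrt d1 * Real.sqrt t) * Real.sqrt t :=
      mul_le_mul_of_nonneg_right habs (Real.sqrt_nonneg t)
    have hexp : (2*(Bw*Bφ) + lamreg * ((Bw / Real.sqrt lamreg) * Real.sqrt t)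
          + ε0 * Real.sqrt d1 * Real.sqrt t) * Real.sqrt t
        = 2*(Bw*Bφ) * Real.sqrt t + lamreg * (Bw / Real.sqrt lamreg) * t
          + ε0 * Real.sqrt d1 * t := by
      have hss : Real.sqrt t * Real.sqrt t = t := Real.mul_self_sqrt ht0
      linear_combination (lamreg * (Bw / Real.sqrt lamreg) + ε0 * Real.sqrt d1) * hss
    have b1 : 2*(Bw*Bφ) * Real.sqrt t ≤ 2*(Bw*Bφ) * (Bφ / Real.sqrt lamreg) :=
      mul_le_mul_of_nonneg_left hst (by nlinarith [hBw0, hBφ0])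
    have b2 : lamreg * (Bw / Real.sqrt lamreg) * t
        ≤ lamreg * (Bw / Real.sqrt lamreg) * (Bφ^2/lamreg) :=
      mul_le_mul_of_nonneg_left htle
        (mul_nonneg hlam.le (div_nonneg hBw0 hsqlam.le))
    have b3 : ε0 * Real.sqrt d1 * t ≤ ε0 * Real.sqrt d1 * (Bφ^2/lamreg) :=
      mul_le_mul_of_nonneg_left htle (mul_nonneg hε0 (Real.sqrt_nonneg _))
    have heq : 2*(Bw*Bφ) * (Bφ / Real.sqrt lamreg)
        + lamreg * (Bw / Real.sqrt lamreg) * (Bφ^2/lamreg)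
        = 3*(Bw*Bφ^2) / Real.sqrt lamreg := by
      field_simp
      ring
    calc |c| * Real.sqrt t ≤ _ := step1
      _ = _ := hexp
      _ ≤ 3*(Bw*Bφ^2) / Real.sqrt lamreg + ε0 * Real.sqrt d1 * (Bφ^2/lamreg) := by
          rw [← heq]; linarith
  -- final assembly
  rcases eq_or_lt_of_le hd10 with h0 | hpos
  · rw [← h0, Real.sqrt_zero, div_zero, zero_mul, Real.sqrt_zero, div_zero, zero_add]
    apply div_nonneg _ hlam.le
    have hs2 : (0:ℝ) ≤ 2 + Real.sqrt 2 := by positivity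
    exact mul_nonneg (mul_nonneg hs2 (sq_nonneg _)) hε0
  · have hs : 0 < Real.sqrt d1 := Real.sqrt_pos.mpr hpos
    rw [hmn]
    have step : |c| * Real.sqrt t / Real.sqrt d1
        ≤ (3*(Bw*Bφ^2) / Real.sqrt lamreg + ε0 * Real.sqrt d1 * (Bφ^2/lamreg))
          / Real.sqrt d1 := (div_le_div_iff_of_pos_right hs).mpr hnum
    refine le_trans step ?_
    have hrw : (3*(Bw*Bφ^2) / Real.sqrt lamreg + ε0 * Real.sqrt d1 * (Bφ^2/lamreg))
          / Real.sqrt d1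
        = 3*(Bw*Bφ^2) / (Real.sqrt d1 * Real.sqrt lamreg) + ε0 * Bφ^2 / lamreg := by
      rw [add_div, div_div, mul_comm (Real.sqrt lamreg) (Real.sqrt d1)]
      congr 1
      rw [show ε0 * Real.sqrt d1 * (Bφ^2/lamreg) = Real.sqrt d1 * (ε0 * Bφ^2 / lamreg) by ring]
      exact mul_div_cancel_left₀ _ hs.ne'
    rw [hrw, Real.sqrt_mul hd10]
    apply add_le_add
    · exact (div_le_div_iff_of_pos_right (mul_pos hs hsqlam)).mpr (num1 hBw0 hBφ0)
    · exact (div_le_div_iff_of_pos_right hlam).mpr (num2 hε0)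
end
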